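/- arXiv:2308.16690 — 6 statements merged into one kernel-verified Lean document; each statement's English description precedes it below -/
import Mathlib

section
/- If (X̄, Ȳ) is a global minimizer of F₀(X,Y) := f(X Yᵀ) + λ(nnzc(X) + nnzc(Y)) over ℝ^{m×d} × ℝ^{n×d}, then the sets of indices of nonzero columns of X̄ and Ȳ coincide, and nnzc(X̄) = nnzc(Ȳ) = rank(X̄ Ȳᵀ). -/
open Matrix

open scoped Classical in
/-- Number of nonzero columns of a matrix. -/
noncomputable def nnzc {m d : ℕ} (A : Matrix (Fin m) (Fin d) ℝ) : ℕ :=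
  (Finset.univ.filter (fun j : Fin d => (fun i => A i j) ≠ 0)).card

/-!
Since `f (X Yᵀ)` depends only on the product, a minimizer `(X̄, Ȳ)` of `F₀` minimizes
`nnzc X + nnzc Y` among all factorizations `X Yᵀ = X̄ Ȳᵀ`. Zeroing the columns of `X̄` that
vanish in `Ȳ` keeps the product, so the column supports agree. Both `nnzc X̄` and `nnzc Ȳ` are
at least `rank (X̄ Ȳᵀ)`, while a rank factorization padded with zero columns has cost
`2 rank (X̄ Ȳᵀ)`; hence both equal the rank.
-/

open Finset

namespace Matrix

section ColSupport

variable {R ι κ : Type*}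

variable (R) in
def colMask [Zero R] [One R] [DecidableEq κ] (S : Finset κ) : Matrix κ κ R :=
  diagonal fun j => if j ∈ S then 1 else 0

theorem colMask_transpose [Zero R] [One R] [DecidableEq κ] (S : Finset κ) :
    (colMask R S)ᵀ = colMask R S :=
  diagonal_transpose _

variable [Fintype κ]

open scoped Classical in
noncomputable def colSupport [Zero R] (A : Matrix ι κ R) : Finset κ :=
  univ.filter fun j => (fun i => A i j) ≠ 0

theorem mem_colSupport [Zero R] {A : Matrix ι κ R} {j : κ} :
    j ∈ colSupport A ↔ (fun i => A i j) ≠ 0 := by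
  simp [colSupport]

theorem coe_colSupport [Zero R] (A : Matrix ι κ R) :
    (colSupport A : Set κ) = {j | (fun i => A i j) ≠ 0} := by
  ext j
  exact mem_colSupport

theorem colSupport_mul_subset [NonUnitalNonAssocSemiring R] {ι' : Type*} [Fintype ι']
    (A : Matrix ι ι' R) (B : Matrix ι' κ R) : colSupport (A * B) ⊆ colSupport B := by
  intro j hj
  rw [mem_colSupport] at hj ⊢
  contrapose! hj
  ext i
  simp [mul_apply, fun k => congrFun hj k]

variable [DecidableEq κ] [Semiring R]

theorem colSupport_mul_colMask (A : Matrix ι κ R) (S : Finset κ) :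
    colSupport (A * colMask R S) = colSupport A ∩ S := by
  ext j
  by_cases hj : j ∈ S <;> simp [mem_colSupport, colMask, hj, funext_iff]

theorem mul_colMask_of_colSupport_subset {A : Matrix ι κ R} {S : Finset κ}
    (h : colSupport A ⊆ S) : A * colMask R S = A := by
  ext i j
  by_cases hj : j ∈ S
  · simp [colMask, hj]
  · have hcol : (fun i => A i j) = 0 := by
      by_contra hne
      exact hj (h (mem_colSupport.mpr hne))
    simp [colMask, hj, congrFun hcol i]

theorem card_colSupport_submatrix_one_le {ι' : Type*} [Fintype ι'] (e : ι' ↪ κ) :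
    #(colSupport ((1 : Matrix κ κ R).submatrix e id)) ≤ Fintype.card ι' := by
  have : colSupport ((1 : Matrix κ κ R).submatrix e id) ⊆ univ.map e := by
    intro j hj
    obtain ⟨a, ha⟩ := Function.ne_iff.mp (mem_colSupport.mp hj)
    have hea : e a = j := by
      by_contra hne
      exact ha (one_apply_ne hne)
    exact hea ▸ mem_map_of_mem e (mem_univ a)
  simpa using card_le_card this

end ColSupport

section Rank

variable {K m n κ : Type*} [Field K] [Fintype κ]

theorem rank_le_card_colSupport (A : Matrix m κ K) : A.rank ≤ #(colSupport A) := by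
  classical
  calc A.rank = (A * colMask K (colSupport A)).rank := by
        rw [mul_colMask_of_colSupport_subset le_rfl]
    _ ≤ (colMask K (colSupport A)).rank := rank_mul_le_right _ _
    _ = #(colSupport A) := by
        rw [colMask, rank_diagonal, Fintype.card_subtype]
        congr 1
        ext j
        simp

variable [Fintype m] [Fintype n]

theorem exists_rank_factorization (M : Matrix m n K) :
    ∃ (B : Matrix m (Fin M.rank) K) (C : Matrix n (Fin M.rank) K), B * Cᵀ = M := by
  let b := Module.finBasisOfFinrankEq K _ (rank_eq_finrank_span_cols M).symm
  let c : n → Submodule.span K (Set.range M.col) :=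
    fun k => ⟨M.col k, Submodule.subset_span ⟨k, rfl⟩⟩
  refine ⟨of fun i a => (b a : m → K) i, of fun k a => b.repr (c k) a, ?_⟩
  ext i k
  have := congrArg (fun v : Submodule.span K (Set.range M.col) => (v : m → K) i)
    (b.sum_repr (c k))
  simp only [Submodule.coe_sum, Finset.sum_apply, Submodule.coe_smul, Pi.smul_apply,
    smul_eq_mul] at this
  simpa [mul_apply, mul_comm, c] using this

theorem exists_mul_transpose_eq_card_colSupport_le (M : Matrix m n K)
    (h : M.rank ≤ Fintype.card κ) : ∃ (X : Matrix m κ K) (Y : Matrix n κ K),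
      X * Yᵀ = M ∧ #(colSupport X) ≤ M.rank ∧ #(colSupport Y) ≤ M.rank := by
  classical
  obtain ⟨B, C, hBC⟩ := exists_rank_factorization M
  obtain ⟨e⟩ := Function.Embedding.nonempty_of_card_le (α := Fin M.rank) (by simpa using h)
  set P : Matrix (Fin M.rank) κ K := (1 : Matrix κ κ K).submatrix e id
  have hP : P * Pᵀ = 1 := by
    rw [transpose_submatrix, transpose_one, ← submatrix_mul _ _ _ _ _ Function.bijective_id,
      Matrix.one_mul, submatrix_one_embedding]
  have hsupp : #(colSupport P) ≤ M.rank := by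
    simpa using card_colSupport_submatrix_one_le (R := K) e
  refine ⟨B * P, C * P, ?_, (card_le_card (colSupport_mul_subset B P)).trans hsupp,
    (card_le_card (colSupport_mul_subset C P)).trans hsupp⟩
  rw [transpose_mul, Matrix.mul_assoc, ← Matrix.mul_assoc P, hP, Matrix.one_mul, hBC]

end Rank

section Sparsest

variable {K m n κ : Type*} [Field K] [Fintype κ]

def IsSparsestFactorization (X : Matrix m κ K) (Y : Matrix n κ K) : Prop :=
  ∀ (X' : Matrix m κ K) (Y' : Matrix n κ K), X' * Y'ᵀ = X * Yᵀ →
    #(colSupport X) + #(colSupport Y) ≤ #(colSupport X') + #(colSupport Y')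

variable {X : Matrix m κ K} {Y : Matrix n κ K}

theorem IsSparsestFactorization.swap (h : IsSparsestFactorization X Y) :
    IsSparsestFactorization Y X := fun Y' X' hYX => by
  have hXY : X' * Y'ᵀ = X * Yᵀ := by
    simpa only [transpose_mul, transpose_transpose] using congrArg transpose hYX
  have := h X' Y' hXY
  omega

theorem IsSparsestFactorization.colSupport_subset (h : IsSparsestFactorization X Y) :
    colSupport X ⊆ colSupport Y := by
  classical
  have hmask : X * colMask K (colSupport Y) * Yᵀ = X * Yᵀ := by
    rw [Matrix.mul_assoc, ← colMask_transpose, ← transpose_mul,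
      mul_colMask_of_colSupport_subset le_rfl]
  have hcard := h _ Y hmask
  rw [colSupport_mul_colMask] at hcard
  exact inter_eq_left.mp (eq_of_subset_of_card_le inter_subset_left (by omega))

theorem IsSparsestFactorization.colSupport_eq (h : IsSparsestFactorization X Y) :
    colSupport X = colSupport Y :=
  h.colSupport_subset.antisymm h.swap.colSupport_subset

variable [Fintype m] [Fintype n]

theorem IsSparsestFactorization.card_colSupport_eq_rank (h : IsSparsestFactorization X Y) :
    #(colSupport X) = (X * Yᵀ).rank ∧ #(colSupport Y) = (X * Yᵀ).rank := by
  have hX : (X * Yᵀ).rank ≤ #(colSupport X) :=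
    (rank_mul_le_left X Yᵀ).trans (rank_le_card_colSupport X)
  have hY : (X * Yᵀ).rank ≤ #(colSupport Y) :=
    (rank_mul_le_right X Yᵀ).trans ((rank_transpose Y).trans_le (rank_le_card_colSupport Y))
  obtain ⟨X', Y', hXY', hX', hY'⟩ :=
    exists_mul_transpose_eq_card_colSupport_le (κ := κ) (X * Yᵀ) (hX.trans (card_le_univ _))
  have := h X' Y' hXY'
  omega

end Sparsest

end Matrix

theorem nnzc_eq_card_colSupport {m d : ℕ} (A : Matrix (Fin m) (Fin d) ℝ) :
    nnzc A = #(colSupport A) := by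
  unfold nnzc colSupport
  congr

theorem isSparsestFactorization_of_forall_le {m n d : ℕ} {f : Matrix (Fin m) (Fin n) ℝ → ℝ}
    {lam : ℝ} (hlam : 0 < lam) {Xb : Matrix (Fin m) (Fin d) ℝ} {Yb : Matrix (Fin n) (Fin d) ℝ}
    (hmin : ∀ (X : Matrix (Fin m) (Fin d) ℝ) (Y : Matrix (Fin n) (Fin d) ℝ),
      f (Xb * Ybᵀ) + lam * ((nnzc Xb : ℝ) + (nnzc Yb : ℝ)) ≤
      f (X * Yᵀ) + lam * ((nnzc X : ℝ) + (nnzc Y : ℝ))) :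
    IsSparsestFactorization Xb Yb := fun X Y hXY => by
  have := hmin X Y
  rw [hXY, add_le_add_iff_left, mul_le_mul_iff_right₀ hlam] at this
  simp only [← nnzc_eq_card_colSupport]
  exact_mod_cast this

theorem global_min_nnzc_eq_rank_general {m n d : ℕ}
    (f : Matrix (Fin m) (Fin n) ℝ → ℝ)
    (lam : ℝ) (hlam : 0 < lam)
    (Xb : Matrix (Fin m) (Fin d) ℝ) (Yb : Matrix (Fin n) (Fin d) ℝ)
    (hmin : ∀ (X : Matrix (Fin m) (Fin d) ℝ) (Y : Matrix (Fin n) (Fin d) ℝ),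
      f (Xb * Ybᵀ) + lam * ((nnzc Xb : ℝ) + (nnzc Yb : ℝ)) ≤
      f (X * Yᵀ) + lam * ((nnzc X : ℝ) + (nnzc Y : ℝ))) :
    {j : Fin d | (fun i => Xb i j) ≠ 0} = {j : Fin d | (fun i => Yb i j) ≠ 0} ∧
    nnzc Xb = (Xb * Ybᵀ).rank ∧ nnzc Yb = (Xb * Ybᵀ).rank := by
  have h := isSparsestFactorization_of_forall_le hlam hmin
  simp only [nnzc_eq_card_colSupport]
  refine ⟨?_, h.card_colSupport_eq_rank⟩
  rw [← coe_colSupport, ← coe_colSupport, h.colSupport_eq]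

/-- If `(X̄, Ȳ)` is a global minimizer of `F₀(X,Y) = f(X Yᵀ) + λ(nnzc X + nnzc Y)`,
then the nonzero-column index sets of `X̄` and `Ȳ` coincide and
`nnzc X̄ = nnzc Ȳ = rank(X̄ Ȳᵀ)`. -/
theorem global_min_nnzc_eq_rank {m n d : ℕ}
    (f : Matrix (Fin m) (Fin n) ℝ → ℝ) (hf : Continuous f)
    (lam : ℝ) (hlam : 0 < lam)
    (Xb : Matrix (Fin m) (Fin d) ℝ) (Yb : Matrix (Fin n) (Fin d) ℝ)
    (hmin : ∀ (X : Matrix (Fin m) (Fin d) ℝ) (Y : Matrix (Fin n) (Fin d) ℝ),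
      f (Xb * Ybᵀ) + lam * ((nnzc Xb : ℝ) + (nnzc Yb : ℝ)) ≤
      f (X * Yᵀ) + lam * ((nnzc X : ℝ) + (nnzc Y : ℝ))) :
    {j : Fin d | (fun i => Xb i j) ≠ 0} = {j : Fin d | (fun i => Yb i j) ≠ 0} ∧
    nnzc Xb = (Xb * Ybᵀ).rank ∧ nnzc Yb = (Xb * Ybᵀ).rank :=
  global_min_nnzc_eq_rank_general f lam hlam Xb Yb hmin
end

section
/- If Z is a global minimizer of f(Z) + 2λ·rank(Z) over {Z ∈ ℝ^{m×n} : rank(Z) ≤ d}, and (X, Y) ∈ ℝ^{m×d} × ℝ^{n×d} satisfies X Yᵀ = Z and nnzc(X) = nnzc(Y) = rank(Z), then (X, Y) is a global minimizer of F₀(X,Y) = f(X Yᵀ) + λ(nnzc(X) + nnzc(Y)) over ℝ^{m×d} × ℝ^{n×d}. -/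
open Matrix

open scoped Classical in
lemma rank_le_nnzc {m d : ℕ} (A : Matrix (Fin m) (Fin d) ℝ) : A.rank ≤ nnzc A := by
  rw [Matrix.rank_eq_finrank_span_cols]
  set s : Finset (Fin m → ℝ) :=
    (Finset.univ.filter (fun j : Fin d => (fun i => A i j) ≠ 0)).image (fun j => Aᵀ j) with hs
  have h1 : Submodule.span ℝ (Set.range Aᵀ) ≤ Submodule.span ℝ (s : Set (Fin m → ℝ)) := by
    rw [Submodule.span_le]
    rintro _ ⟨j, rfl⟩
    by_cases h : (fun i => A i j) = 0
    · have hz : Aᵀ j = 0 := funext fun i => congrFun h i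
      rw [hz]; exact Submodule.zero_mem _
    · exact Submodule.subset_span (by
        simp only [s, Finset.coe_image, Set.mem_image, Finset.mem_coe, Finset.mem_filter,
          Finset.mem_univ, true_and]
        exact ⟨j, h, rfl⟩)
  calc Module.finrank ℝ (Submodule.span ℝ (Set.range Aᵀ))
      ≤ Module.finrank ℝ (Submodule.span ℝ (s : Set (Fin m → ℝ))) := Submodule.finrank_mono h1
    _ ≤ s.card := finrank_span_finset_le_card s
    _ ≤ nnzc A := Finset.card_image_le

/-- If `Z` is a global minimizer of `f(Z) + 2λ rank(Z)` over matrices of rank ≤ d,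
and `X Yᵀ = Z` with `nnzc X = nnzc Y = rank Z`, then `(X, Y)` is a global minimizer
of `F₀(X,Y) = f(X Yᵀ) + λ(nnzc X + nnzc Y)`. -/
theorem rank_min_gives_factorized_min {m n d : ℕ}
    (f : Matrix (Fin m) (Fin n) ℝ → ℝ) (lam : ℝ) (hlam : 0 < lam)
    (Z : Matrix (Fin m) (Fin n) ℝ) (hZd : Z.rank ≤ d)
    (hmin : ∀ W : Matrix (Fin m) (Fin n) ℝ, W.rank ≤ d →
      f Z + 2 * lam * (Z.rank : ℝ) ≤ f W + 2 * lam * (W.rank : ℝ))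
    (X : Matrix (Fin m) (Fin d) ℝ) (Y : Matrix (Fin n) (Fin d) ℝ)
    (hfac : X * Yᵀ = Z) (hX : nnzc X = Z.rank) (hY : nnzc Y = Z.rank) :
    ∀ (X' : Matrix (Fin m) (Fin d) ℝ) (Y' : Matrix (Fin n) (Fin d) ℝ),
      f (X * Yᵀ) + lam * ((nnzc X : ℝ) + (nnzc Y : ℝ)) ≤
      f (X' * Y'ᵀ) + lam * ((nnzc X' : ℝ) + (nnzc Y' : ℝ)) := by
  intro X' Y'
  set W := X' * Y'ᵀ with hW
  have hrX : W.rank ≤ X'.rank := Matrix.rank_mul_le_left X' Y'ᵀ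
  have hrY : W.rank ≤ Y'.rank := by
    have := Matrix.rank_mul_le_right X' Y'ᵀ
    rwa [Matrix.rank_transpose] at this
  have h1 : W.rank ≤ nnzc X' := hrX.trans (rank_le_nnzc X')
  have h2 : W.rank ≤ nnzc Y' := hrY.trans (rank_le_nnzc Y')
  have hd : W.rank ≤ d := h1.trans (by
    unfold nnzc
    exact (Finset.card_filter_le _ _).trans (by simp))
  have hm := hmin W hd
  rw [hfac, hX, hY]
  have hcast1 : (W.rank : ℝ) ≤ (nnzc X' : ℝ) := by exact_mod_cast h1
  have hcast2 : (W.rank : ℝ) ≤ (nnzc Y' : ℝ) := by exact_mod_cast h2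
  nlinarith [hm, hcast1, hcast2, hlam.le]
end

section
/- Let Z̄ ∈ ℝ^{m×n}. Then Z̄ is a local minimizer of f(Z) + 2λ·rank(Z) over {Z : rank(Z) ≤ d} if and only if Z̄ is a local minimizer of f on the set {Z : rank(Z) ≤ d} ∩ {Z : rank(Z) = rank(Z̄)}. -/
open Matrix Filter

private lemma rank_lsc {m n : ℕ} (Zb : Matrix (Fin m) (Fin n) ℝ) :
    ∀ᶠ Z in nhds Zb, Zb.rank ≤ Z.rank := by
  let L : Matrix (Fin m) (Fin n) ℝ →ₗ[ℝ] ((Fin n → ℝ) →L[ℝ] (Fin m → ℝ)) :=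
    (LinearMap.toContinuousLinearMap :
      ((Fin n → ℝ) →ₗ[ℝ] (Fin m → ℝ)) ≃ₗ[ℝ] _).toLinearMap ∘ₗ
      (Matrix.toLin' : Matrix (Fin m) (Fin n) ℝ ≃ₗ[ℝ] _).toLinearMap
  have hLcont : Continuous L := L.continuous_of_finiteDimensional
  have hrank : ∀ Z : Matrix (Fin m) (Fin n) ℝ,
      ((Zb.rank : Cardinal) ≤ ((L Z : (Fin n → ℝ) →L[ℝ] (Fin m → ℝ)) :
        (Fin n → ℝ) →ₗ[ℝ] (Fin m → ℝ)).rank ↔ Zb.rank ≤ Z.rank) := by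
    intro Z
    have h1 : ((L Z : (Fin n → ℝ) →L[ℝ] (Fin m → ℝ)) :
        (Fin n → ℝ) →ₗ[ℝ] (Fin m → ℝ)) = Z.mulVecLin := by
      simp [L, Matrix.toLin'_apply']
    rw [h1]
    have h2 : (Z.mulVecLin).rank = (Z.rank : Cardinal) := by
      rw [LinearMap.rank, ← Module.finrank_eq_rank]
      rfl
    rw [h2, Nat.cast_le]
  have hopen : IsOpen {Z : Matrix (Fin m) (Fin n) ℝ | Zb.rank ≤ Z.rank} := by
    have := (isOpen_setOf_nat_le_rank (𝕜 := ℝ) (E := Fin n → ℝ) (F := Fin m → ℝ)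
      Zb.rank).preimage hLcont
    convert this using 1
    ext Z
    simp only [Set.mem_setOf_eq, Set.mem_preimage, hrank Z]
  exact hopen.mem_nhds (by simp)

/-- `Z̄` is a local minimizer of `f(Z) + 2λ rank(Z)` over `{Z : rank Z ≤ d}` iff
`Z̄` is a local minimizer of `f` on `{Z : rank Z ≤ d} ∩ {Z : rank Z = rank Z̄}`. -/
theorem local_min_rank_reg_iff {m n d : ℕ}
    (f : Matrix (Fin m) (Fin n) ℝ → ℝ) (hf : Continuous f)
    (lam : ℝ) (hlam : 0 < lam)
    (Zb : Matrix (Fin m) (Fin n) ℝ) (hd : Zb.rank ≤ d) :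
    IsLocalMinOn (fun Z : Matrix (Fin m) (Fin n) ℝ => f Z + 2 * lam * (Z.rank : ℝ))
        {Z : Matrix (Fin m) (Fin n) ℝ | Z.rank ≤ d} Zb ↔
    IsLocalMinOn f
        ({Z : Matrix (Fin m) (Fin n) ℝ | Z.rank ≤ d} ∩
          {Z : Matrix (Fin m) (Fin n) ℝ | Z.rank = Zb.rank}) Zb := by
  constructor
  · intro h
    rw [IsLocalMinOn, IsMinFilter] at h ⊢
    have h' : ∀ᶠ Z in nhdsWithin Zb ({Z : Matrix (Fin m) (Fin n) ℝ | Z.rank ≤ d} ∩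
          {Z : Matrix (Fin m) (Fin n) ℝ | Z.rank = Zb.rank}),
        f Zb + 2 * lam * (Zb.rank : ℝ) ≤ f Z + 2 * lam * (Z.rank : ℝ) :=
      h.filter_mono (nhdsWithin_mono Zb Set.inter_subset_left)
    have hmem : ∀ᶠ Z in nhdsWithin Zb ({Z : Matrix (Fin m) (Fin n) ℝ | Z.rank ≤ d} ∩
          {Z : Matrix (Fin m) (Fin n) ℝ | Z.rank = Zb.rank}), Z.rank = Zb.rank :=
      eventually_mem_nhdsWithin.mono (fun Z hZ => hZ.2)
    filter_upwards [h', hmem] with Z hZ hr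
    rw [hr] at hZ
    linarith
  · intro h
    rw [IsLocalMinOn, IsMinFilter] at h ⊢
    -- eventually, rank Z ≥ rank Zb
    have hlsc : ∀ᶠ Z in nhdsWithin Zb {Z : Matrix (Fin m) (Fin n) ℝ | Z.rank ≤ d},
        Zb.rank ≤ Z.rank := nhdsWithin_le_nhds (rank_lsc Zb)
    -- eventually, f Z ≥ f Zb - 2*lam
    have hfc : ∀ᶠ Z in nhdsWithin Zb {Z : Matrix (Fin m) (Fin n) ℝ | Z.rank ≤ d},
        f Zb - 2 * lam < f Z := by
      apply nhdsWithin_le_nhds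
      have : ∀ᶠ y in nhds (f Zb), f Zb - 2 * lam < y :=
        eventually_gt_nhds (by linarith)
      exact (hf.tendsto Zb).eventually this
    -- unpack the hypothesis on the intersection:
    rw [nhdsWithin_inter'] at h
    rw [eventually_inf_principal] at h
    have h'' : ∀ᶠ Z in nhdsWithin Zb {Z : Matrix (Fin m) (Fin n) ℝ | Z.rank ≤ d},
        Z.rank = Zb.rank → f Zb ≤ f Z := h
    have hmem : ∀ᶠ Z in nhdsWithin Zb {Z : Matrix (Fin m) (Fin n) ℝ | Z.rank ≤ d},
        Z.rank ≤ d := eventually_mem_nhdsWithin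
    filter_upwards [hlsc, hfc, h'', hmem] with Z h1 h2 h3 h4
    rcases eq_or_lt_of_le h1 with heq | hlt
    · have := h3 heq.symm
      rw [← heq]
      linarith
    · have hr : (Zb.rank : ℝ) + 1 ≤ (Z.rank : ℝ) := by exact_mod_cast hlt
      nlinarith
end

section
/- If Z̄ is a local minimizer of f(Z) + 2λ·rank(Z) over {Z ∈ ℝ^{m×n} : rank(Z) ≤ d}, and (X̄, Ȳ) ∈ ℝ^{m×d} × ℝ^{n×d} satisfies X̄ Ȳᵀ = Z̄ and nnzc(X̄) = nnzc(Ȳ) = rank(Z̄), then (X̄, Ȳ) is a local minimizer of F₀(X,Y) = f(X Yᵀ) + λ(nnzc(X) + nnzc(Y)). -/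
open Matrix

open scoped Classical in
lemma rank_mul_le_nnzc {m n d : ℕ} (X : Matrix (Fin m) (Fin d) ℝ)
    (Y : Matrix (Fin n) (Fin d) ℝ) : (X * Yᵀ).rank ≤ nnzc X := by
  set s : Finset (Fin d) := Finset.univ.filter (fun j => (fun i => X i j) ≠ 0) with hs
  let X' : Matrix (Fin m) {j // j ∈ s} ℝ := fun i j => X i j.1
  let Y' : Matrix (Fin n) {j // j ∈ s} ℝ := fun i j => Y i j.1
  have hxy : X * Yᵀ = X' * Y'ᵀ := by
    ext i k
    simp only [Matrix.mul_apply, Matrix.transpose_apply]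
    have h1 : ∑ j ∈ s, X i j * Y k j = ∑ j, X i j * Y k j := by
      refine Finset.sum_subset (Finset.subset_univ s) ?_
      intro j _ hj
      have hz : (fun i => X i j) = 0 := by
        by_contra hne
        exact hj (by simp [hs, hne])
      have := congrFun hz i
      simp only [Pi.zero_apply] at this
      simp [this]
    rw [← h1, ← Finset.sum_coe_sort s (fun j => X i j * Y k j)]
  calc (X * Yᵀ).rank = (X' * Y'ᵀ).rank := by rw [hxy]
    _ ≤ X'.rank := Matrix.rank_mul_le_left _ _
    _ ≤ Fintype.card {j // j ∈ s} := Matrix.rank_le_card_width _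
    _ = s.card := Fintype.card_coe s
    _ = nnzc X := rfl

/-- If `Z̄` is a local minimizer of `f(Z) + 2λ rank(Z)` over `{rank ≤ d}` and
`X̄ Ȳᵀ = Z̄` with `nnzc X̄ = nnzc Ȳ = rank Z̄`, then `(X̄, Ȳ)` is a local minimizer
of `F₀(X,Y) = f(X Yᵀ) + λ(nnzc X + nnzc Y)`. -/
theorem local_min_lifts_to_factorization {m n d : ℕ}
    (f : Matrix (Fin m) (Fin n) ℝ → ℝ) (hf : Continuous f)
    (lam : ℝ) (hlam : 0 < lam)
    (Zb : Matrix (Fin m) (Fin n) ℝ)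
    (hloc : IsLocalMinOn (fun Z : Matrix (Fin m) (Fin n) ℝ => f Z + 2 * lam * (Z.rank : ℝ))
        {Z : Matrix (Fin m) (Fin n) ℝ | Z.rank ≤ d} Zb)
    (Xb : Matrix (Fin m) (Fin d) ℝ) (Yb : Matrix (Fin n) (Fin d) ℝ)
    (hfac : Xb * Ybᵀ = Zb) (hX : nnzc Xb = Zb.rank) (hY : nnzc Yb = Zb.rank) :
    IsLocalMin (fun p : Matrix (Fin m) (Fin d) ℝ × Matrix (Fin n) (Fin d) ℝ =>
        f (p.1 * p.2ᵀ) + lam * ((nnzc p.1 : ℝ) + (nnzc p.2 : ℝ))) (Xb, Yb) := by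
  have h2 : ∀ (X : Matrix (Fin m) (Fin d) ℝ) (Y : Matrix (Fin n) (Fin d) ℝ),
      2 * (X * Yᵀ).rank ≤ nnzc X + nnzc Y := by
    intro X Y
    have h1 := rank_mul_le_nnzc X Y
    have h2' : (X * Yᵀ).rank ≤ nnzc Y := by
      have h3 := rank_mul_le_nnzc Y X
      rwa [← Matrix.rank_transpose, Matrix.transpose_mul, Matrix.transpose_transpose] at h3
    omega
  have hrd : ∀ (X : Matrix (Fin m) (Fin d) ℝ) (Y : Matrix (Fin n) (Fin d) ℝ),
      (X * Yᵀ).rank ≤ d :=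
    fun X Y => le_trans (Matrix.rank_mul_le_left _ _)
      (le_trans (Matrix.rank_le_card_width _) (by simp))
  have hev : ∀ᶠ Z in nhds Zb, Z ∈ {Z : Matrix (Fin m) (Fin n) ℝ | Z.rank ≤ d} →
      f Zb + 2 * lam * (Zb.rank : ℝ) ≤ f Z + 2 * lam * (Z.rank : ℝ) :=
    eventually_nhdsWithin_iff.mp hloc
  have hφ : ContinuousAt (fun p : Matrix (Fin m) (Fin d) ℝ × Matrix (Fin n) (Fin d) ℝ =>
      p.1 * p.2ᵀ) (Xb, Yb) :=
    (continuous_fst.matrix_mul continuous_snd.matrix_transpose).continuousAt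
  have hten : Filter.Tendsto (fun p : Matrix (Fin m) (Fin d) ℝ × Matrix (Fin n) (Fin d) ℝ =>
      p.1 * p.2ᵀ) (nhds (Xb, Yb)) (nhds Zb) := by
    simpa [ContinuousAt, hfac] using hφ
  filter_upwards [hten.eventually hev] with p hp
  have hineq := hp (hrd p.1 p.2)
  have hc : (2 * ((p.1 * p.2ᵀ).rank : ℝ)) ≤ (nnzc p.1 : ℝ) + (nnzc p.2 : ℝ) := by
    exact_mod_cast h2 p.1 p.2
  have hmul := mul_le_mul_of_nonneg_left hc hlam.le
  simp only [hfac, hX, hY]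
  push_cast
  nlinarith [hineq]
end

section
/- Let g : ℝ^q → ℝ ∪ {∞} be defined by g(v) = λ·𝟙{v ≠ 0} + δ_{B_α}(v), where B_α is the closed Euclidean ball of radius α > 0 and λ > 0. Then for v ∈ B_α: the regular (Fréchet) subdifferential of g at v equals the normal cone N_{B_α}(v) if v ≠ 0, and equals all of ℝ^q if v = 0. -/
/-! Away from `0`, `g` agrees near `v` with `λ` plus the indicator of the convex ball, so a
regular subgradient must have nonpositive slope along every segment into the ball, which is
the normal cone condition; conversely normal vectors satisfy the defining inequality
outright. At `0`, `g` jumps from `0` up to `λ`, and a positive jump absorbs the term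
`⟨ζ, w⟩ - ε‖w‖`, which is small near `0`. -/

open scoped Classical

/-- The regular (Fréchet) subdifferential of an extended-real-valued function `g` at a
point `v` where `g v` is finite: `ζ` belongs to it iff
`liminf_{w→v, w≠v} (g w − g v − ⟨ζ, w−v⟩)/‖w−v‖ ≥ 0`, expressed equivalently as:
for every `ε > 0`, eventually near `v` (punctured) one has
`g v + ⟨ζ, w−v⟩ − ε‖w−v‖ ≤ g w`. -/
def regSubdiff {q : ℕ} (g : EuclideanSpace ℝ (Fin q) → EReal)
    (v : EuclideanSpace ℝ (Fin q)) : Set (EuclideanSpace ℝ (Fin q)) :=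
  {ζ | ∀ ε : ℝ, 0 < ε → ∀ᶠ w in nhdsWithin v {v}ᶜ,
      (((g v).toReal + (inner ℝ ζ (w - v) : ℝ) - ε * ‖w - v‖ : ℝ) : EReal) ≤ g w}

open Filter Topology Set

section RegSubdiff

variable {q : ℕ} {g : EuclideanSpace ℝ (Fin q) → EReal}

theorem tendsto_add_smul_nhdsGT_nhdsNE {E : Type*} [NormedAddCommGroup E] [NormedSpace ℝ E]
    (v : E) {d : E} (hd : d ≠ 0) :
    Tendsto (fun t : ℝ => v + t • d) (𝓝[>] 0) (𝓝[≠] v) := by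
  refine tendsto_nhdsWithin_iff.2 ⟨?_, ?_⟩
  · have hcont : Continuous fun t : ℝ => v + t • d := by fun_prop
    exact (hcont.tendsto' 0 v (by simp)).mono_left nhdsWithin_le_nhds
  · filter_upwards [self_mem_nhdsWithin] with t (ht : 0 < t)
    simp [ht.ne', hd]

theorem inner_le_zero_of_mem_regSubdiff {v ζ d : EuclideanSpace ℝ (Fin q)} {r : ℝ}
    (hζ : ζ ∈ regSubdiff g v) (hgv : g v = r) (hd : d ≠ 0)
    (hdesc : ∀ᶠ t in 𝓝[>] (0 : ℝ), g (v + t • d) ≤ r) :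
    inner ℝ ζ d ≤ 0 := by
  refine le_of_forall_pos_le_add fun δ hδ => ?_
  have hdn : 0 < ‖d‖ := norm_pos_iff.2 hd
  obtain ⟨t, hsub, hle, ht : 0 < t⟩ := ((tendsto_add_smul_nhdsGT_nhdsNE v hd).eventually
    (hζ (δ / ‖d‖) (by positivity)) |>.and (hdesc.and self_mem_nhdsWithin)).exists
  simp only [hgv, EReal.toReal_coe, add_sub_cancel_left, real_inner_smul_right, norm_smul,
    Real.norm_of_nonneg ht.le] at hsub
  have hineq : r + t * inner ℝ ζ d - δ / ‖d‖ * (t * ‖d‖) ≤ r := by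
    exact_mod_cast hsub.trans hle
  rw [div_mul_eq_mul_div, mul_div_assoc, mul_div_cancel_right₀ _ hdn.ne'] at hineq
  nlinarith

theorem regSubdiff_eq_normalCone_of_eventuallyEq {v : EuclideanSpace ℝ (Fin q)}
    {C : Set (EuclideanSpace ℝ (Fin q))} {r : ℝ} (hC : Convex ℝ C) (hv : v ∈ C)
    (hg : ∀ᶠ w in 𝓝 v, g w = if w ∈ C then (r : EReal) else ⊤) :
    regSubdiff g v = {u | ∀ w ∈ C, inner ℝ u (w - v) ≤ 0} := by
  have hgv : g v = r := by simpa [hv] using hg.self_of_nhds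
  ext ζ
  constructor
  · intro hζ w hw
    rcases eq_or_ne w v with rfl | hwv
    · simp
    refine inner_le_zero_of_mem_regSubdiff hζ hgv (sub_ne_zero.2 hwv) ?_
    have hpath := (tendsto_add_smul_nhdsGT_nhdsNE v (sub_ne_zero.2 hwv)).mono_right
      nhdsWithin_le_nhds
    filter_upwards [hpath.eventually hg, Ioo_mem_nhdsGT one_pos] with t hgt ht
    simp [hgt, hC.add_smul_sub_mem hv hw ⟨ht.1.le, ht.2.le⟩]
  · intro hζ ε hε
    filter_upwards [nhdsWithin_le_nhds hg] with w hgw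
    rw [hgw, hgv, EReal.toReal_coe]
    split_ifs with hw
    · have hinner := hζ w hw
      have hnorm : 0 ≤ ε * ‖w - v‖ := by positivity
      exact_mod_cast (by linarith : r + inner ℝ ζ (w - v) - ε * ‖w - v‖ ≤ r)
    · exact le_top

theorem regSubdiff_eq_univ_of_eventually_le {v : EuclideanSpace ℝ (Fin q)} {r c : ℝ}
    (hgv : g v = r) (hc : 0 < c) (hjump : ∀ᶠ w in 𝓝[≠] v, ((r + c : ℝ) : EReal) ≤ g w) :
    regSubdiff g v = univ := by
  refine eq_univ_of_forall fun ζ ε _ => ?_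
  have hslope : Tendsto (fun w => inner ℝ ζ (w - v) - ε * ‖w - v‖) (𝓝 v) (𝓝 0) := by
    have hcont : Continuous fun w => inner ℝ ζ (w - v) - ε * ‖w - v‖ := by fun_prop
    simpa using hcont.tendsto v
  filter_upwards [nhdsWithin_le_nhds (hslope.eventually (gt_mem_nhds hc)), hjump]
    with w hsmall hw
  rw [hgv, EReal.toReal_coe]
  exact le_trans (by exact_mod_cast (by linarith)) hw

end RegSubdiff

/-- For `g(v) = λ·𝟙{v ≠ 0} + δ_{B_α}(v)` and `v ∈ B_α`: the regular subdifferential of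
`g` at `v` equals the normal cone `N_{B_α}(v)` if `v ≠ 0`, and equals all of `ℝ^q`
if `v = 0`. -/
theorem regSubdiff_l0_ball {q : ℕ} (lam α : ℝ) (hlam : 0 < lam) (hα : 0 < α)
    (g : EuclideanSpace ℝ (Fin q) → EReal)
    (hg : g = fun v => if ‖v‖ ≤ α then (if v = 0 then (0 : EReal) else (lam : ℝ)) else ⊤)
    (v : EuclideanSpace ℝ (Fin q)) (hv : ‖v‖ ≤ α) :
    (v ≠ 0 → regSubdiff g v =
      {u : EuclideanSpace ℝ (Fin q) | ∀ w, ‖w‖ ≤ α → (inner ℝ u (w - v) : ℝ) ≤ 0}) ∧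
    (v = 0 → regSubdiff g v = Set.univ) := by
  constructor
  · intro hv0
    have hnear : ∀ᶠ w in 𝓝 v,
        g w = if w ∈ Metric.closedBall 0 α then ((lam : ℝ) : EReal) else ⊤ := by
      filter_upwards [isOpen_ne.mem_nhds hv0] with w hw
      simp [hg, hw]
    rw [regSubdiff_eq_normalCone_of_eventuallyEq (convex_closedBall 0 α) (by simpa using hv)
      hnear]
    simp only [mem_closedBall_zero_iff]
  · rintro rfl
    refine regSubdiff_eq_univ_of_eventually_le (r := 0) (c := lam) (by simp [hg, hα.le]) hlam ?_
    filter_upwards [nhdsWithin_le_nhds (Metric.closedBall_mem_nhds 0 hα), self_mem_nhdsWithin]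
      with w hwα (hw0 : w ≠ 0)
    simp [hg, mem_closedBall_zero_iff.1 hwα, hw0]
end

section
/- Suppose f : ℝ^{m×n} → ℝ is continuous, λ > 0, and let the feasible set be matrices of rank at most d. If Z̄ is a local minimizer of f on {Z : rank(Z) ≤ d, rank(Z) = rank(Z̄)}, then Z̄ is a local minimizer of f(Z) + 2λ·rank(Z) on {Z : rank(Z) ≤ d}. -/
open Matrix

lemma rank_lower_semicontinuous_aux {m n : ℕ} (r : ℕ) :
    IsOpen {Z : Matrix (Fin m) (Fin n) ℝ | r ≤ Z.rank} := by
  let T : Matrix (Fin m) (Fin n) ℝ →ₗ[ℝ] ((Fin n → ℝ) →L[ℝ] (Fin m → ℝ)) :=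
    (LinearMap.toContinuousLinearMap : ((Fin n → ℝ) →ₗ[ℝ] (Fin m → ℝ)) ≃ₗ[ℝ] _).toLinearMap ∘ₗ
      (Matrix.toLin' : Matrix (Fin m) (Fin n) ℝ ≃ₗ[ℝ] _).toLinearMap
  have hT : Continuous T := T.continuous_of_finiteDimensional
  have hopen : IsOpen {g : (Fin n → ℝ) →L[ℝ] (Fin m → ℝ) | (r : Cardinal) ≤ (g : (Fin n → ℝ) →ₗ[ℝ] (Fin m → ℝ)).rank} :=
    isOpen_setOf_nat_le_rank r
  have : {Z : Matrix (Fin m) (Fin n) ℝ | r ≤ Z.rank} = T ⁻¹' {g | (r : Cardinal) ≤ (g : (Fin n → ℝ) →ₗ[ℝ] (Fin m → ℝ)).rank} := by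
    ext Z
    simp only [Set.mem_setOf_eq, Set.mem_preimage, T, LinearMap.coe_comp, Function.comp_apply,
      LinearEquiv.coe_coe, LinearMap.coe_toContinuousLinearMap]
    rw [LinearMap.rank, ← Module.finrank_eq_rank, Nat.cast_le]
    rfl
  rw [this]
  exact hopen.preimage hT

/-- If `Z̄` is a local minimizer of `f` on `{Z : rank Z ≤ d} ∩ {Z : rank Z = rank Z̄}`,
then `Z̄` is a local minimizer of `f(Z) + 2λ rank(Z)` on `{Z : rank Z ≤ d}`. -/
theorem local_min_of_local_min_on_rank_level {m n d : ℕ}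
    (f : Matrix (Fin m) (Fin n) ℝ → ℝ) (hf : Continuous f)
    (lam : ℝ) (hlam : 0 < lam)
    (Zb : Matrix (Fin m) (Fin n) ℝ) (hd : Zb.rank ≤ d)
    (hloc : IsLocalMinOn f
        ({Z : Matrix (Fin m) (Fin n) ℝ | Z.rank ≤ d} ∩
          {Z : Matrix (Fin m) (Fin n) ℝ | Z.rank = Zb.rank}) Zb) :
    IsLocalMinOn (fun Z : Matrix (Fin m) (Fin n) ℝ => f Z + 2 * lam * (Z.rank : ℝ))
        {Z : Matrix (Fin m) (Fin n) ℝ | Z.rank ≤ d} Zb := by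
  have h1 : ∀ᶠ Z in nhds Zb, Zb.rank ≤ Z.rank :=
    (rank_lower_semicontinuous_aux Zb.rank).mem_nhds (by simp)
  have h2 : ∀ᶠ Z in nhds Zb, f Zb ≤ f Z + 2 * lam := by
    have : ∀ᶠ Z in nhds Zb, f Z ∈ Set.Ioo (f Zb - 2 * lam) (f Zb + 2 * lam) := by
      apply hf.continuousAt.preimage_mem_nhds
      exact Ioo_mem_nhds (by linarith) (by linarith)
    filter_upwards [this] with Z hZ
    linarith [hZ.1]
  have h3 : ∀ᶠ Z in nhds Zb,
      Z ∈ ({Z : Matrix (Fin m) (Fin n) ℝ | Z.rank ≤ d} ∩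
        {Z : Matrix (Fin m) (Fin n) ℝ | Z.rank = Zb.rank}) → f Zb ≤ f Z := by
    have := hloc
    rw [IsLocalMinOn, IsMinFilter, eventually_nhdsWithin_iff] at this
    exact this
  rw [IsLocalMinOn, IsMinFilter, eventually_nhdsWithin_iff]
  filter_upwards [h1, h2, h3] with Z hr hfb hmin hZs
  by_cases hrank : Z.rank = Zb.rank
  · have := hmin ⟨hZs, hrank⟩
    rw [hrank]
    linarith
  · have hgt : Zb.rank + 1 ≤ Z.rank := lt_of_le_of_ne hr (fun h => hrank h.symm)
    have : (Zb.rank : ℝ) + 1 ≤ (Z.rank : ℝ) := by exact_mod_cast hgt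
    nlinarith
end
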